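/- In QHC, for every problem α, ⊢ ?!?α ↔ ?α, and for every proposition p, ⊢ !?!p ↔ !p. -/

import Mathlib

/- Problem (intuitionistic) formulas and proposition (classical) formulas of QHC. -/
mutual
inductive PF : Type
  | var : Nat → PF
  | bot : PF
  | and : PF → PF → PF
  | or : PF → PF → PF
  | imp : PF → PF → PF
  | bang : CF → PF
inductive CF : Type
  | var : Nat → CF
  | fls : CF
  | and : CF → CF → CF
  | or : CF → CF → CF
  | imp : CF → CF → CF
  | quest : PF → CF
end

def PF.neg (α : PF) : PF := α.imp PF.bot
def CF.neg (p : CF) : CF := p.imp CF.fls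
def PF.iff (α β : PF) : PF := (α.imp β).and (β.imp α)
def CF.iff (p q : CF) : CF := (p.imp q).and (q.imp p)
def CF.box (p : CF) : CF := CF.quest (PF.bang p)
def PF.nabla (α : PF) : PF := PF.bang (CF.quest α)

/- Derivability in QHC, parameterized by a set `Ax` of extra problem axioms
(used to treat the axiom ¬!0 and its variants uniformly). -/
mutual
inductive ProvP (Ax : PF → Prop) : PF → Prop
  | axm {α} : Ax α → ProvP Ax α
  | mp {α β} : ProvP Ax (α.imp β) → ProvP Ax α → ProvP Ax β
  | ak (α β : PF) : ProvP Ax (α.imp (β.imp α))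
  | as (α β γ : PF) : ProvP Ax ((α.imp (β.imp γ)).imp ((α.imp β).imp (α.imp γ)))
  | andI (α β : PF) : ProvP Ax (α.imp (β.imp (α.and β)))
  | andE1 (α β : PF) : ProvP Ax ((α.and β).imp α)
  | andE2 (α β : PF) : ProvP Ax ((α.and β).imp β)
  | orI1 (α β : PF) : ProvP Ax (α.imp (α.or β))
  | orI2 (α β : PF) : ProvP Ax (β.imp (α.or β))
  | orE (α β γ : PF) : ProvP Ax ((α.imp γ).imp ((β.imp γ).imp ((α.or β).imp γ)))
  | exf (α : PF) : ProvP Ax (PF.bot.imp α)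
  | bangIntro {p} : ProvC Ax p → ProvP Ax (PF.bang p)
  | bangImp (p q : CF) : ProvP Ax ((PF.bang (p.imp q)).imp ((PF.bang p).imp (PF.bang q)))
  | bangQuest (α : PF) : ProvP Ax (α.imp (PF.bang (CF.quest α)))
inductive ProvC (Ax : PF → Prop) : CF → Prop
  | mp {p q} : ProvC Ax (p.imp q) → ProvC Ax p → ProvC Ax q
  | ak (p q : CF) : ProvC Ax (p.imp (q.imp p))
  | as (p q r : CF) : ProvC Ax ((p.imp (q.imp r)).imp ((p.imp q).imp (p.imp r)))
  | andI (p q : CF) : ProvC Ax (p.imp (q.imp (p.and q)))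
  | andE1 (p q : CF) : ProvC Ax ((p.and q).imp p)
  | andE2 (p q : CF) : ProvC Ax ((p.and q).imp q)
  | orI1 (p q : CF) : ProvC Ax (p.imp (p.or q))
  | orI2 (p q : CF) : ProvC Ax (q.imp (p.or q))
  | orE (p q r : CF) : ProvC Ax ((p.imp r).imp ((q.imp r).imp ((p.or q).imp r)))
  | exf (p : CF) : ProvC Ax (CF.fls.imp p)
  | lem (p : CF) : ProvC Ax (p.or (p.imp CF.fls))
  | questIntro {α} : ProvP Ax α → ProvC Ax (CF.quest α)
  | questImp (α β : PF) : ProvC Ax ((CF.quest (α.imp β)).imp ((CF.quest α).imp (CF.quest β)))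
  | questBang (p : CF) : ProvC Ax ((CF.quest (PF.bang p)).imp p)
end

/-- The axiom (!⊥): ¬!0. -/
def QHCAx : PF → Prop := fun α => α = (PF.bang CF.fls).imp PF.bot

def PrvP (α : PF) : Prop := ProvP QHCAx α
def PrvC (p : CF) : Prop := ProvC QHCAx p

/-! In `?!?α ↔ ?α` the forward direction is the axiom `?!p → p` at `p = ?α`, and the
backward one is `α → !?α` pushed through `?`. Dually, in `!?!p ↔ !p` the forward direction
is `?!p → p` pushed through `!`, and the backward one is `α → !?α` at `α = !p`. -/

variable {Ax : PF → Prop}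

theorem ProvP.iff_intro {α β : PF} (hαβ : ProvP Ax (α.imp β)) (hβα : ProvP Ax (β.imp α)) :
    ProvP Ax (α.iff β) :=
  .mp (.mp (.andI _ _) hαβ) hβα

theorem ProvC.iff_intro {p q : CF} (hpq : ProvC Ax (p.imp q)) (hqp : ProvC Ax (q.imp p)) :
    ProvC Ax (p.iff q) :=
  .mp (.mp (.andI _ _) hpq) hqp

theorem ProvP.bang_imp_bang {p q : CF} (h : ProvC Ax (p.imp q)) :
    ProvP Ax ((PF.bang p).imp (PF.bang q)) :=
  .mp (.bangImp p q) (.bangIntro h)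

theorem ProvC.quest_imp_quest {α β : PF} (h : ProvP Ax (α.imp β)) :
    ProvC Ax ((CF.quest α).imp (CF.quest β)) :=
  .mp (.questImp α β) (.questIntro h)

theorem ProvC.quest_bang_quest_iff (α : PF) :
    ProvC Ax (CF.iff (CF.quest (PF.bang (CF.quest α))) (CF.quest α)) :=
  .iff_intro (.questBang (CF.quest α)) (.quest_imp_quest (.bangQuest α))

theorem ProvP.bang_quest_bang_iff (p : CF) :
    ProvP Ax (PF.iff (PF.bang (CF.quest (PF.bang p))) (PF.bang p)) :=
  .iff_intro (.bang_imp_bang (.questBang p)) (.bangQuest (PF.bang p))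

theorem qhc_triple_alternation :
    (∀ α : PF, PrvC (CF.iff (CF.quest (PF.bang (CF.quest α))) (CF.quest α))) ∧
    (∀ p : CF, PrvP (PF.iff (PF.bang (CF.quest (PF.bang p))) (PF.bang p))) :=
  ⟨ProvC.quest_bang_quest_iff, ProvP.bang_quest_bang_iff⟩
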